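/- Fix p ∈ (1/2, 1) and n. For a weight vector ω : Fin n → ℕ, let G(S,ω) be 1, 1/2, or 0 according to whether ∑_{j∈S} ω_j is greater than, equal to, or less than half of ∑_j ω_j, and let P(A|ω) = ∑_{S ⊆ Fin n} p^{|S|}(1-p)^{n-|S|} G(S,ω). Then P(A|ω) is maximized over all weight vectors by the all-ones vector: P(A | 𝟙_n) ≥ P(A | ω) for every ω. -/
import Mathlib


open Finset

/-- Winning probability of A given that exactly the voters in `S` support A. -/
noncomputable def G {n : ℕ} (ω : Fin n → ℕ) (S : Finset (Fin n)) : ℝ :=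
  if 2 * ∑ j ∈ S, ω j > ∑ j, ω j then 1
  else if 2 * ∑ j ∈ S, ω j = ∑ j, ω j then 1/2
  else 0

/-- Probability that A wins when each voter independently supports A with probability `p`. -/
noncomputable def PA {n : ℕ} (p : ℝ) (ω : Fin n → ℕ) : ℝ :=
  ∑ S : Finset (Fin n), p ^ S.card * (1 - p) ^ (n - S.card) * G ω S

lemma G_compl {n : ℕ} (ω : Fin n → ℕ) (S : Finset (Fin n)) :
    G ω Sᶜ = 1 - G ω S := by
  have hsum : ∑ j ∈ S, ω j + ∑ j ∈ Sᶜ, ω j = ∑ j, ω j :=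
    Finset.sum_add_sum_compl S ω
  unfold G
  generalize ha : ∑ j ∈ S, ω j = a at *
  generalize hb : ∑ j ∈ Sᶜ, ω j = b at *
  generalize ht : ∑ j, ω j = t at *
  split_ifs <;> (try norm_num) <;> omega

lemma G_nonneg {n : ℕ} (ω : Fin n → ℕ) (S : Finset (Fin n)) : 0 ≤ G ω S := by
  unfold G; split_ifs <;> norm_num

lemma G_le_one {n : ℕ} (ω : Fin n → ℕ) (S : Finset (Fin n)) : G ω S ≤ 1 := by
  unfold G; split_ifs <;> norm_num

lemma card_compl' {n : ℕ} (S : Finset (Fin n)) : Sᶜ.card = n - S.card := by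
  rw [Finset.card_compl, Fintype.card_fin]

lemma sum_compl_reindex {n : ℕ} (f : Finset (Fin n) → ℝ) :
    ∑ S : Finset (Fin n), f S = ∑ S : Finset (Fin n), f Sᶜ :=
  (Fintype.sum_bijective _ (Function.Involutive.bijective compl_involutive)
    _ _ (fun _ => rfl)).symm

lemma PA_eq {n : ℕ} (p : ℝ) (ω : Fin n → ℕ) :
    PA p ω = ∑ S : Finset (Fin n),
      p ^ (n - S.card) * (1 - p) ^ (n - (n - S.card)) * (1 - G ω S) := by
  have := sum_compl_reindex (fun S : Finset (Fin n) =>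
    p ^ S.card * (1 - p) ^ (n - S.card) * G ω S)
  rw [PA, this]
  refine Finset.sum_congr rfl fun S _ => ?_
  rw [card_compl', G_compl]

/-- For `p ∈ (1/2, 1)`, the probability that A wins is maximized by the
all-ones (equal-weight) vector. -/
theorem stmt_3 {n : ℕ} (p : ℝ) (hp : 1/2 < p) (hp1 : p < 1) (ω : Fin n → ℕ) :
    PA p (fun _ : Fin n => 1) ≥ PA p ω := by
  have hq0 : (0:ℝ) < 1 - p := by linarith
  have hqp : 1 - p < p := by linarith
  set w : ℕ → ℝ := fun k => p ^ k * (1 - p) ^ (n - k) with hw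
  -- monotonicity of w
  have hwmono : ∀ a b : ℕ, a + b = n → b ≤ a → w b ≤ w a := by
    intro a b hab hba
    have h1 : n - b = a := by omega
    have h2 : n - a = b := by omega
    have h3 : (1 - p) ^ a = (1 - p) ^ b * (1 - p) ^ (a - b) := by
      rw [← pow_add]; congr 1; omega
    have h4 : p ^ a = p ^ b * p ^ (a - b) := by
      rw [← pow_add]; congr 1; omega
    simp only [hw, h1, h2, h3, h4]
    have h5 : (1 - p) ^ (a - b) ≤ p ^ (a - b) :=
      pow_le_pow_left₀ hq0.le hqp.le _
    have h6 : (0:ℝ) ≤ p ^ b * (1 - p) ^ b := by positivity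
    nlinarith [pow_nonneg hq0.le b, pow_nonneg (by linarith : (0:ℝ) ≤ p) b]
  -- 2 * PA = const + ∑ (w card - w (n - card)) * G
  have key : ∀ ω' : Fin n → ℕ, 2 * PA p ω' =
      (∑ S : Finset (Fin n), w (n - S.card)) +
      ∑ S : Finset (Fin n), (w S.card - w (n - S.card)) * G ω' S := by
    intro ω'
    have h2 := PA_eq p ω'
    have hPA : PA p ω' = ∑ S : Finset (Fin n), w S.card * G ω' S := rfl
    have h2' : 2 * PA p ω' = PA p ω' + PA p ω' := by ring
    rw [h2']
    nth_rewrite 1 [hPA]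
    rw [h2, ← Finset.sum_add_distrib, ← Finset.sum_add_distrib]
    refine Finset.sum_congr rfl fun S _ => ?_
    have hc : S.card ≤ n := by
      simpa [Fintype.card_fin] using Finset.card_le_univ S
    have hnn : n - (n - S.card) = S.card := by omega
    simp only [hw, hnn]
    ring
  -- termwise comparison
  have hsum1 : ∑ j : Fin n, (1 : ℕ) = n := by simp
  have hterm : ∀ S : Finset (Fin n),
      0 ≤ (w S.card - w (n - S.card)) * (G (fun _ => 1) S - G ω S) := by
    intro S
    have hc : S.card ≤ n := by
      simpa [Fintype.card_fin] using Finset.card_le_univ S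
    have hcardsum : ∑ j ∈ S, (1 : ℕ) = S.card := by simp
    rcases lt_trichotomy (2 * S.card) n with h | h | h
    · have hG1 : G (fun _ => 1) S = 0 := by
        unfold G
        rw [hcardsum, hsum1, if_neg (by omega), if_neg (by omega)]
      have hw' : w S.card ≤ w (n - S.card) := hwmono _ _ (by omega) (by omega)
      rw [hG1]
      have := G_nonneg ω S
      nlinarith
    · have he : n - S.card = S.card := by omega
      rw [he, sub_self, zero_mul]
    · have hG1 : G (fun _ => 1) S = 1 := by
        unfold G
        rw [hcardsum, hsum1, if_pos (by omega)]
      have hw' : w (n - S.card) ≤ w S.card := hwmono _ _ (by omega) (by omega)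
      rw [hG1]
      have := G_le_one ω S
      nlinarith
  have hdiff : 0 ≤ 2 * PA p (fun _ : Fin n => 1) - 2 * PA p ω := by
    rw [key, key]
    have h0 : ∀ (a x y : ℝ), a + x - (a + y) = x - y := by intros; ring
    rw [h0, ← Finset.sum_sub_distrib]
    refine Finset.sum_nonneg fun S _ => ?_
    rw [← mul_sub]
    exact hterm S
  linarith
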